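/- arXiv:2102.08754 — 6 statements merged into one kernel-verified Lean document; each statement's English description precedes it below -/
import Mathlib

section
/- (First Decomposition Lemma, formula.) Let μ be any probability measure on [0,1]² and p ∈ [0,1]. Then E_{(s,b)∼μ}[gft(p,s,b)] = ∫_0^1 μ([0,p] × [max{λ,p}, 1]) dλ − ∫_0^1 μ([λ,p] × [p,1]) dλ. -/
open MeasureTheory Set
open scoped ENNReal

/-- Gain from trade: `gft p s b = (b - s) · 𝟙{s ≤ p ≤ b}`. -/
noncomputable def gft (p s b : ℝ) : ℝ := if s ≤ p ∧ p ≤ b then b - s else 0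

/-- **First Decomposition Lemma (formula).**
For any probability measure `μ` on `[0,1]²` and any `p ∈ [0,1]`,
`E_{(s,b)∼μ}[gft(p,s,b)]
  = ∫_0^1 μ([0,p] × [max{λ,p},1]) dλ − ∫_0^1 μ([λ,p] × [p,1]) dλ`. -/
theorem first_decomposition_formula
    (μ : Measure (ℝ × ℝ)) [IsProbabilityMeasure μ]
    (hμ : μ (Icc (0:ℝ) 1 ×ˢ Icc (0:ℝ) 1) = 1)
    (p : ℝ) (hp : p ∈ Icc (0:ℝ) 1) :
    ∫ x, gft p x.1 x.2 ∂μ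
      = (∫ l in (0:ℝ)..1, (μ (Icc (0:ℝ) p ×ˢ Icc (max l p) 1)).toReal)
        - ∫ l in (0:ℝ)..1, (μ (Icc l p ×ˢ Icc p 1)).toReal := by
  set sq : Set (ℝ × ℝ) := Icc (0:ℝ) 1 ×ˢ Icc (0:ℝ) 1 with hsq
  have hsqm : MeasurableSet sq := measurableSet_Icc.prod measurableSet_Icc
  have hnull : μ sqᶜ = 0 := by
    rw [measure_compl hsqm (measure_ne_top _ _), hμ, measure_univ, tsub_self]
  set T : Set (ℝ × (ℝ × ℝ)) :=
    {q | q.2.1 ≤ p ∧ p ≤ q.2.2 ∧ q.2.1 ≤ q.1 ∧ q.1 ≤ q.2.2} with hTdef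
  have hT : MeasurableSet T := by
    have : T = {q : ℝ × (ℝ × ℝ) | q.2.1 ≤ p} ∩ ({q | p ≤ q.2.2} ∩
        ({q | q.2.1 ≤ q.1} ∩ {q | q.1 ≤ q.2.2})) := rfl
    rw [this]
    exact (measurableSet_le measurable_snd.fst measurable_const).inter
      ((measurableSet_le measurable_const measurable_snd.snd).inter
        ((measurableSet_le measurable_snd.fst measurable_fst).inter
          (measurableSet_le measurable_fst measurable_snd.snd)))
  have hgmeas : Measurable fun x : ℝ × ℝ => gft p x.1 x.2 := by
    unfold gft
    exact Measurable.ite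
      ((measurableSet_le measurable_fst measurable_const).inter
        (measurableSet_le measurable_const measurable_snd))
      (measurable_snd.sub measurable_fst) measurable_const
  have hgnn : ∀ x : ℝ × ℝ, 0 ≤ gft p x.1 x.2 := by
    intro x; unfold gft; split
    · next h => linarith [h.1, h.2]
    · exact le_rfl
  have hLHS : ∫ x, gft p x.1 x.2 ∂μ
      = (∫⁻ x, ENNReal.ofReal (gft p x.1 x.2) ∂μ).toReal :=
    integral_eq_lintegral_of_nonneg_ae (ae_of_all _ hgnn) hgmeas.aestronglyMeasurable
  -- key identity : write gft as an integral over λ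
  have hae : ∀ᵐ x ∂μ, x ∈ sq := by
    rw [ae_iff]
    exact hnull
  have key : ∫⁻ x, ENNReal.ofReal (gft p x.1 x.2) ∂μ
      = ∫⁻ l in Icc (0:ℝ) 1, μ (Prod.mk l ⁻¹' T) := by
    have h1 : ∀ᵐ x ∂μ, ENNReal.ofReal (gft p x.1 x.2)
        = ∫⁻ l in Icc (0:ℝ) 1, T.indicator 1 (l, x) := by
      filter_upwards [hae] with x hx
      obtain ⟨⟨hx10, hx20⟩, hx11, hx21⟩ :
          (0 ≤ x.1 ∧ 0 ≤ x.2) ∧ x.1 ≤ 1 ∧ x.2 ≤ 1 := by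
        simpa [hsq, mem_prod, mem_Icc, Prod.le_def] using hx
      by_cases hc : x.1 ≤ p ∧ p ≤ x.2
      · have hind : ∀ l, T.indicator 1 (l, x)
            = (Icc x.1 x.2).indicator (fun _ => (1 : ℝ≥0∞)) l := by
          intro l
          by_cases hl : l ∈ Icc x.1 x.2
          · rw [indicator_of_mem hl,
              indicator_of_mem (show (l, x) ∈ T from ⟨hc.1, hc.2, hl.1, hl.2⟩)]
            rfl
          · rw [indicator_of_notMem hl, indicator_of_notMem]
            intro hmem
            exact hl ⟨hmem.2.2.1, hmem.2.2.2⟩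
        rw [lintegral_congr hind, lintegral_indicator measurableSet_Icc, setLIntegral_one,
          Measure.restrict_apply measurableSet_Icc,
          inter_eq_left.2 (Icc_subset_Icc hx10 hx21), Real.volume_Icc]
        unfold gft
        rw [if_pos hc]
      · have hind : ∀ l, T.indicator (1 : ℝ × ℝ × ℝ → ℝ≥0∞) (l, x) = (0 : ℝ≥0∞) := by
          intro l
          apply indicator_of_notMem
          intro hmem
          exact hc ⟨hmem.1, hmem.2.1⟩
        have hz : ∫⁻ l in Icc (0:ℝ) 1, T.indicator (1 : ℝ × ℝ × ℝ → ℝ≥0∞) (l, x) = 0 :=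
          (lintegral_congr hind).trans lintegral_zero
        rw [hz]
        unfold gft
        rw [if_neg hc, ENNReal.ofReal_zero]
    rw [lintegral_congr_ae h1]
    have hswap := lintegral_lintegral_swap
      (μ := μ) (ν := (volume : Measure ℝ).restrict (Icc (0:ℝ) 1))
      (f := fun (x : ℝ × ℝ) (l : ℝ) => T.indicator (1 : ℝ × ℝ × ℝ → ℝ≥0∞) (l, x))
      ((((measurable_const : Measurable fun _ : ℝ × (ℝ × ℝ) => (1 : ℝ≥0∞)).indicator
        hT).comp measurable_swap).aemeasurable)
    rw [hswap]
    refine lintegral_congr fun l => ?_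
    have : (fun x : ℝ × ℝ => T.indicator (1 : ℝ × ℝ × ℝ → ℝ≥0∞) (l, x))
        = (Prod.mk l ⁻¹' T).indicator (1 : ℝ × ℝ → ℝ≥0∞) := by
      funext x
      by_cases h : (l, x) ∈ T
      · rw [indicator_of_mem h, indicator_of_mem (show x ∈ Prod.mk l ⁻¹' T from h)]
        rfl
      · rw [indicator_of_notMem h,
          indicator_of_notMem (show x ∉ Prod.mk l ⁻¹' T from h)]
    rw [this, lintegral_indicator_one (measurable_prodMk_left hT)]
  -- a.e. in l, singleton slices are null
  have hcnt : Set.Countable {l : ℝ | 0 < μ ({l} ×ˢ Icc p 1)} := by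
    apply MeasureTheory.Measure.countable_meas_pos_of_disjoint_iUnion
      (As := fun l : ℝ => {l} ×ˢ Icc p 1)
    · intro l; exact (measurableSet_singleton l).prod measurableSet_Icc
    · intro i j hij
      rw [Function.onFun, Set.disjoint_left]
      rintro x hx hy
      exact hij ((mem_singleton_iff.1 hx.1).symm.trans (mem_singleton_iff.1 hy.1))
  have hnullset : ∀ᵐ l ∂((volume : Measure ℝ).restrict (Icc (0:ℝ) 1)),
      μ ({l} ×ˢ Icc p 1) = 0 := by
    refine ae_restrict_of_ae ?_
    rw [ae_iff]
    refine measure_mono_null (fun l hl => ?_) (hcnt.measure_zero volume)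
    exact pos_iff_ne_zero.2 hl
  -- the pointwise decomposition
  have hkey2 : ∀ᵐ l ∂((volume : Measure ℝ).restrict (Icc (0:ℝ) 1)),
      μ (Prod.mk l ⁻¹' T) + μ (Icc l p ×ˢ Icc p 1)
        = μ (Icc (0:ℝ) p ×ˢ Icc (max l p) 1) := by
    filter_upwards [hnullset, ae_restrict_mem measurableSet_Icc] with l hl0 hlI
    obtain ⟨hl0', hl1⟩ := hlI
    have hpre : μ (Prod.mk l ⁻¹' T) = μ (Prod.mk l ⁻¹' T ∩ sq) :=
      (measure_inter_conull hnull).symm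
    rcases le_or_gt p l with hpl | hlp
    · -- case p ≤ l
      have hset : Prod.mk l ⁻¹' T ∩ sq = Icc (0:ℝ) p ×ˢ Icc (max l p) 1 := by
        ext x
        simp only [hTdef, hsq, mem_inter_iff, mem_preimage, mem_setOf_eq, mem_prod,
          mem_Icc, max_eq_left hpl]
        constructor
        · rintro ⟨⟨h1, h2, h3, h4⟩, ⟨h5, h6⟩, h7, h8⟩
          exact ⟨⟨h5, h1⟩, h4, h8⟩
        · rintro ⟨⟨h5, h1⟩, h4, h8⟩
          exact ⟨⟨h1, le_trans hpl h4, le_trans h1 hpl, h4⟩,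
            ⟨h5, le_trans h1 hp.2⟩, le_trans hp.1 (le_trans hpl h4), h8⟩
      have h2z : μ (Icc l p ×ˢ Icc p 1) = 0 := by
        rcases eq_or_lt_of_le hpl with heq | hlt
        · subst heq
          rw [Icc_self]
          exact hl0
        · rw [Icc_eq_empty (not_le.2 hlt), empty_prod, measure_empty]
      rw [hpre, hset, h2z, add_zero]
    · -- case l < p
      have hset : Prod.mk l ⁻¹' T ∩ sq = Icc (0:ℝ) l ×ˢ Icc p 1 := by
        ext x
        simp only [hTdef, hsq, mem_inter_iff, mem_preimage, mem_setOf_eq, mem_prod,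
          mem_Icc]
        constructor
        · rintro ⟨⟨h1, h2, h3, h4⟩, ⟨h5, h6⟩, h7, h8⟩
          exact ⟨⟨h5, h3⟩, h2, h8⟩
        · rintro ⟨⟨h5, h3⟩, h2, h8⟩
          exact ⟨⟨le_trans h3 hlp.le, h2, h3, le_trans hlp.le h2⟩,
            ⟨h5, le_trans h3 hl1⟩, le_trans hp.1 h2, h8⟩
      have hmax : max l p = p := max_eq_right hlp.le
      have hB : μ (Icc (0:ℝ) p ×ˢ Icc p 1)
          = μ (Icc (0:ℝ) l ×ˢ Icc p 1) + μ (Ioc l p ×ˢ Icc p 1) := by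
        rw [← Icc_union_Ioc_eq_Icc hl0' hlp.le, union_prod]
        refine measure_union ?_ (measurableSet_Ioc.prod measurableSet_Icc)
        rw [Set.disjoint_left]
        rintro x ⟨hx1, _⟩ ⟨hy1, _⟩
        exact absurd hx1.2 (not_le.2 hy1.1)
      have hC : μ (Icc l p ×ˢ Icc p 1) = μ (Ioc l p ×ˢ Icc p 1) := by
        apply le_antisymm
        · calc μ (Icc l p ×ˢ Icc p 1)
              ≤ μ (({l} ×ˢ Icc p 1) ∪ (Ioc l p ×ˢ Icc p 1)) := by
                refine measure_mono ?_
                rintro x ⟨hx1, hx2⟩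
                rcases eq_or_lt_of_le hx1.1 with h | h
                · exact Or.inl ⟨h.symm, hx2⟩
                · exact Or.inr ⟨⟨h, hx1.2⟩, hx2⟩
            _ ≤ μ ({l} ×ˢ Icc p 1) + μ (Ioc l p ×ˢ Icc p 1) := measure_union_le _ _
            _ = μ (Ioc l p ×ˢ Icc p 1) := by rw [hl0, zero_add]
        · exact measure_mono (prod_mono Ioc_subset_Icc_self subset_rfl)
      rw [hpre, hset, hmax, hB, hC]
  -- measurability of the integrands
  have hpremeas : Measurable fun l : ℝ => μ (Prod.mk l ⁻¹' T) :=
    measurable_measure_prodMk_left hT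
  have hg1meas : Measurable fun l : ℝ => μ (Icc (0:ℝ) p ×ˢ Icc (max l p) 1) :=
    Antitone.measurable fun a b hab =>
      measure_mono (prod_mono subset_rfl (Icc_subset_Icc_left (max_le_max hab le_rfl)))
  have hg2meas : Measurable fun l : ℝ => μ (Icc l p ×ˢ Icc p 1) :=
    Antitone.measurable fun a b hab =>
      measure_mono (prod_mono (Icc_subset_Icc_left hab) subset_rfl)
  -- finiteness
  have hbound : ∀ f : ℝ → ℝ≥0∞, (∀ l, f l ≤ μ univ) →
      (∫⁻ l in Icc (0:ℝ) 1, f l) ≠ ⊤ := by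
    intro f hf
    refine ne_top_of_le_ne_top ?_ (lintegral_mono hf)
    rw [setLIntegral_const, measure_univ, one_mul, Real.volume_Icc]
    simp
  have hpretop : (∫⁻ l in Icc (0:ℝ) 1, μ (Prod.mk l ⁻¹' T)) ≠ ⊤ :=
    hbound _ fun l => measure_mono (subset_univ _)
  have hL1top : (∫⁻ l in Icc (0:ℝ) 1, μ (Icc (0:ℝ) p ×ˢ Icc (max l p) 1)) ≠ ⊤ :=
    hbound _ fun l => measure_mono (subset_univ _)
  have hL2top : (∫⁻ l in Icc (0:ℝ) 1, μ (Icc l p ×ˢ Icc p 1)) ≠ ⊤ :=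
    hbound _ fun l => measure_mono (subset_univ _)
  -- additivity
  have hadd : (∫⁻ l in Icc (0:ℝ) 1, μ (Prod.mk l ⁻¹' T))
      + (∫⁻ l in Icc (0:ℝ) 1, μ (Icc l p ×ˢ Icc p 1))
      = ∫⁻ l in Icc (0:ℝ) 1, μ (Icc (0:ℝ) p ×ˢ Icc (max l p) 1) := by
    rw [← lintegral_add_left hpremeas]
    exact lintegral_congr_ae hkey2
  -- convert the RHS interval integrals
  have hR1 : ∫ l in (0:ℝ)..1, (μ (Icc (0:ℝ) p ×ˢ Icc (max l p) 1)).toReal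
      = (∫⁻ l in Icc (0:ℝ) 1, μ (Icc (0:ℝ) p ×ˢ Icc (max l p) 1)).toReal := by
    rw [intervalIntegral.integral_of_le (by norm_num : (0:ℝ) ≤ 1),
      Measure.restrict_congr_set Ioc_ae_eq_Icc]
    exact integral_toReal (hg1meas.aemeasurable.restrict)
      (ae_of_all _ fun l => measure_lt_top μ _)
  have hR2 : ∫ l in (0:ℝ)..1, (μ (Icc l p ×ˢ Icc p 1)).toReal
      = (∫⁻ l in Icc (0:ℝ) 1, μ (Icc l p ×ˢ Icc p 1)).toReal := by
    rw [intervalIntegral.integral_of_le (by norm_num : (0:ℝ) ≤ 1),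
      Measure.restrict_congr_set Ioc_ae_eq_Icc]
    exact integral_toReal (hg2meas.aemeasurable.restrict)
      (ae_of_all _ fun l => measure_lt_top μ _)
  rw [hLHS, key, hR1, hR2, ← hadd, ENNReal.toReal_add hpretop hL2top]
  ring
end

section
/- (First Decomposition Lemma, consequence.) Let μ and ν be probability measures on [0,1]² and ε > 0. If |μ(R) − ν(R)| ≤ ε for every axis-parallel rectangle R = [a,b] × [c,d] with a,b,c,d ∈ [0,1], then sup_{q ∈ [0,1]} |E_{(s,b)∼μ}[gft(q,s,b)] − E_{(s,b)∼ν}[gft(q,s,b)]| ≤ 2ε. -/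
/-!
The gain from trade `gft q s b` is the length of the interval
`{t | s ≤ min q t ∧ max q t ≤ b}`, which is `[s, b]` when `q ∈ [s, b]` and empty otherwise.
Integrating over `(s, b) ∼ μ` and swapping the integrals (Fubini) gives
`E_μ[gft q] = ∫ t in [0, 1], μ ([0, min q t] × [max q t, 1])`, an average of masses of
rectangles, so the two expectations differ by at most `ε`.
-/

open MeasureTheory Set
open scoped ENNReal

section Fubini

variable {α β : Type*} [MeasurableSpace α] [MeasurableSpace β]
  {μ : Measure α} {ν : Measure β} [IsFiniteMeasure μ] [IsFiniteMeasure ν] {s : Set (α × β)}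

theorem integral_measureReal_prodMk_left_eq (hs : MeasurableSet s) :
    ∫ x, ν.real (Prod.mk x ⁻¹' s) ∂μ = ∫ y, μ.real ((·, y) ⁻¹' s) ∂ν := by
  simp only [measureReal_def]
  rw [integral_toReal (measurable_measure_prodMk_left hs).aemeasurable
      (ae_of_all _ fun _ ↦ measure_lt_top _ _),
    integral_toReal (measurable_measure_prodMk_right hs).aemeasurable
      (ae_of_all _ fun _ ↦ measure_lt_top _ _),
    ← Measure.prod_apply hs, ← Measure.prod_apply_symm hs]

theorem integrable_measureReal_prodMk_right (hs : MeasurableSet s) :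
    Integrable (fun y ↦ μ.real ((·, y) ⁻¹' s)) ν :=
  .of_bound (measurable_measure_prodMk_right hs).ennreal_toReal.aestronglyMeasurable (μ.real univ)
    (ae_of_all _ fun _ ↦ by
      rw [Real.norm_of_nonneg measureReal_nonneg]
      exact measureReal_mono (subset_univ _))

end Fubini

def gftRegion (q : ℝ) : Set ((ℝ × ℝ) × ℝ) :=
  {p | p.1.1 ≤ min q p.2 ∧ max q p.2 ≤ p.1.2}

theorem measurableSet_gftRegion (q : ℝ) : MeasurableSet (gftRegion q) :=
  (measurableSet_le measurable_fst.fst (measurable_const.min measurable_snd)).inter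
    (measurableSet_le (measurable_const.max measurable_snd) measurable_fst.snd)

theorem gft_eq_volume_real (q s b : ℝ) :
    gft q s b = volume.real {t | s ≤ min q t ∧ max q t ≤ b} := by
  unfold gft
  split_ifs with h
  · have : {t | s ≤ min q t ∧ max q t ≤ b} = Icc s b := by
      ext t
      simp only [mem_ofPred_eq, le_min_iff, max_le_iff, mem_Icc]
      tauto
    rw [this, Real.volume_real_Icc_of_le (h.1.trans h.2)]
  · have : {t | s ≤ min q t ∧ max q t ≤ b} = ∅ := by
      ext t
      simp only [mem_ofPred_eq, le_min_iff, max_le_iff, mem_empty_iff_false, iff_false]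
      tauto
    rw [this, measureReal_empty]

theorem gft_eq_measureReal_prodMk {q : ℝ} {x : ℝ × ℝ}
    (hx : x ∈ Icc (0:ℝ) 1 ×ˢ Icc (0:ℝ) 1) :
    gft q x.1 x.2 = (volume.restrict (Icc (0:ℝ) 1)).real (Prod.mk x ⁻¹' gftRegion q) := by
  rw [measureReal_restrict_apply' measurableSet_Icc, inter_eq_left.mpr, gft_eq_volume_real]
  · rfl
  · rintro t ⟨h1, h2⟩
    exact ⟨hx.1.1.trans (h1.trans (min_le_right _ _)),
      (le_max_right _ _).trans (h2.trans hx.2.2)⟩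

theorem preimage_gftRegion_inter_square (q t : ℝ) :
    (·, t) ⁻¹' gftRegion q ∩ Icc (0:ℝ) 1 ×ˢ Icc (0:ℝ) 1 =
      Icc 0 (min q t) ×ˢ Icc (max q t) 1 := by
  ext x
  simp only [gftRegion, mem_inter_iff, mem_preimage, mem_ofPred_eq, mem_prod, mem_Icc,
    le_min_iff, max_le_iff]
  constructor
  · rintro ⟨⟨⟨hxq, hxt⟩, hqx, htx⟩, ⟨hx0, -⟩, -, hx1⟩
    exact ⟨⟨hx0, hxq, hxt⟩, ⟨hqx, htx⟩, hx1⟩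
  · rintro ⟨⟨hx0, hxq, hxt⟩, ⟨hqx, htx⟩, hx1⟩
    exact ⟨⟨⟨hxq, hxt⟩, hqx, htx⟩, ⟨hx0, by linarith⟩, by linarith, hx1⟩

section Square

variable {m : Measure (ℝ × ℝ)}

theorem measureReal_preimage_gftRegion (hm : ∀ᵐ x ∂m, x ∈ Icc (0:ℝ) 1 ×ˢ Icc (0:ℝ) 1)
    (q t : ℝ) :
    m.real ((·, t) ⁻¹' gftRegion q) = m.real (Icc 0 (min q t) ×ˢ Icc (max q t) 1) := by
  rw [← preimage_gftRegion_inter_square, measureReal_def, measureReal_def,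
    measure_inter_conull (t := Icc (0:ℝ) 1 ×ˢ Icc (0:ℝ) 1) hm]

theorem integral_gft_eq_setIntegral_measureReal [IsFiniteMeasure m]
    (hm : ∀ᵐ x ∂m, x ∈ Icc (0:ℝ) 1 ×ˢ Icc (0:ℝ) 1) (q : ℝ) :
    ∫ x, gft q x.1 x.2 ∂m =
      ∫ t in Icc (0:ℝ) 1, m.real (Icc 0 (min q t) ×ˢ Icc (max q t) 1) :=
  calc ∫ x, gft q x.1 x.2 ∂m
      = ∫ x, (volume.restrict (Icc (0:ℝ) 1)).real (Prod.mk x ⁻¹' gftRegion q) ∂m :=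
        integral_congr_ae (hm.mono fun _ ↦ gft_eq_measureReal_prodMk)
    _ = ∫ t in Icc (0:ℝ) 1, m.real ((·, t) ⁻¹' gftRegion q) :=
        integral_measureReal_prodMk_left_eq (measurableSet_gftRegion q)
    _ = _ := by simp_rw [measureReal_preimage_gftRegion hm]

theorem integrableOn_measureReal_Icc_min_prod_Icc_max [IsFiniteMeasure m]
    (hm : ∀ᵐ x ∂m, x ∈ Icc (0:ℝ) 1 ×ˢ Icc (0:ℝ) 1) (q : ℝ) :
    IntegrableOn (fun t ↦ m.real (Icc 0 (min q t) ×ˢ Icc (max q t) 1)) (Icc (0:ℝ) 1) :=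
  (integrable_measureReal_prodMk_right (measurableSet_gftRegion q)).congr
    (ae_of_all _ (measureReal_preimage_gftRegion hm q))

theorem abs_integral_gft_sub_le {m' : Measure (ℝ × ℝ)} [IsFiniteMeasure m] [IsFiniteMeasure m']
    (hm : ∀ᵐ x ∂m, x ∈ Icc (0:ℝ) 1 ×ˢ Icc (0:ℝ) 1)
    (hm' : ∀ᵐ x ∂m', x ∈ Icc (0:ℝ) 1 ×ˢ Icc (0:ℝ) 1)
    {ε : ℝ} (hrect : ∀ b c, b ∈ Icc (0:ℝ) 1 → c ∈ Icc (0:ℝ) 1 →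
      |m.real (Icc 0 b ×ˢ Icc c 1) - m'.real (Icc 0 b ×ˢ Icc c 1)| ≤ ε)
    {q : ℝ} (hq : q ∈ Icc (0:ℝ) 1) :
    |(∫ x, gft q x.1 x.2 ∂m) - ∫ x, gft q x.1 x.2 ∂m'| ≤ ε := by
  have hbound : ∀ t ∈ Icc (0:ℝ) 1, ‖m.real (Icc 0 (min q t) ×ˢ Icc (max q t) 1)
      - m'.real (Icc 0 (min q t) ×ˢ Icc (max q t) 1)‖ ≤ ε := fun t ht ↦
    hrect _ _ ⟨le_min hq.1 ht.1, min_le_of_left_le hq.2⟩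
      ⟨le_max_of_le_left hq.1, max_le hq.2 ht.2⟩
  rw [integral_gft_eq_setIntegral_measureReal hm, integral_gft_eq_setIntegral_measureReal hm',
    ← integral_sub (integrableOn_measureReal_Icc_min_prod_Icc_max hm q)
      (integrableOn_measureReal_Icc_min_prod_Icc_max hm' q), ← Real.norm_eq_abs]
  calc _ ≤ ε * volume.real (Icc (0:ℝ) 1) :=
        norm_setIntegral_le_of_norm_le_const measure_Icc_lt_top hbound
    _ = ε := by rw [Real.volume_real_Icc_of_le zero_le_one, sub_zero, mul_one]

end Square

theorem first_decomposition_consequence_general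
    (μ ν : Measure (ℝ × ℝ)) [IsProbabilityMeasure μ] [IsProbabilityMeasure ν]
    (hμ : μ (Icc (0:ℝ) 1 ×ˢ Icc (0:ℝ) 1) = 1)
    (hν : ν (Icc (0:ℝ) 1 ×ˢ Icc (0:ℝ) 1) = 1)
    (ε : ℝ)
    (hrect : ∀ a b c d : ℝ, a ∈ Icc (0:ℝ) 1 → b ∈ Icc (0:ℝ) 1 →
      c ∈ Icc (0:ℝ) 1 → d ∈ Icc (0:ℝ) 1 →
      |(μ (Icc a b ×ˢ Icc c d)).toReal - (ν (Icc a b ×ˢ Icc c d)).toReal| ≤ ε) :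
    ∀ q ∈ Icc (0:ℝ) 1,
      |(∫ x, gft q x.1 x.2 ∂μ) - ∫ x, gft q x.1 x.2 ∂ν| ≤ 2 * ε := by
  intro q hq
  have hS : MeasurableSet (Icc (0:ℝ) 1 ×ˢ Icc (0:ℝ) 1) :=
    measurableSet_Icc.prod measurableSet_Icc
  have h0 : (0:ℝ) ∈ Icc (0:ℝ) 1 := left_mem_Icc.mpr zero_le_one
  have h1 : (1:ℝ) ∈ Icc (0:ℝ) 1 := right_mem_Icc.mpr zero_le_one
  have hε : 0 ≤ ε := (abs_nonneg _).trans (hrect 0 0 0 0 h0 h0 h0 h0)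
  have hdiff := abs_integral_gft_sub_le (ae_iff.mpr ((prob_compl_eq_zero_iff hS).mpr hμ))
    (ae_iff.mpr ((prob_compl_eq_zero_iff hS).mpr hν))
    (fun b c hb hc ↦ hrect 0 b c 1 h0 hb hc h1) hq
  linarith

/-- **First Decomposition Lemma (consequence).**
If two probability measures `μ, ν` on `[0,1]²` agree up to `ε` on all axis-parallel
rectangles `[a,b] × [c,d]` with corners in `[0,1]`, then their expected gains from trade
are uniformly within `2ε` of each other over all prices `q ∈ [0,1]`. -/
theorem first_decomposition_consequence
    (μ ν : Measure (ℝ × ℝ)) [IsProbabilityMeasure μ] [IsProbabilityMeasure ν]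
    (hμ : μ (Icc (0:ℝ) 1 ×ˢ Icc (0:ℝ) 1) = 1)
    (hν : ν (Icc (0:ℝ) 1 ×ˢ Icc (0:ℝ) 1) = 1)
    (ε : ℝ) (hε : 0 < ε)
    (hrect : ∀ a b c d : ℝ, a ∈ Icc (0:ℝ) 1 → b ∈ Icc (0:ℝ) 1 →
      c ∈ Icc (0:ℝ) 1 → d ∈ Icc (0:ℝ) 1 →
      |(μ (Icc a b ×ˢ Icc c d)).toReal - (ν (Icc a b ×ˢ Icc c d)).toReal| ≤ ε) :
    ∀ q ∈ Icc (0:ℝ) 1,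
      |(∫ x, gft q x.1 x.2 ∂μ) - ∫ x, gft q x.1 x.2 ∂ν| ≤ 2 * ε :=
  first_decomposition_consequence_general μ ν hμ hν ε hrect
end

section
/- (Second Decomposition Lemma, formula.) Let S and B be independent [0,1]-valued random variables. Then for every price p ∈ [0,1], E[gft(p,S,B)] = P[S ≤ p]·∫_p^1 P[B ≥ λ] dλ + P[B ≥ p]·∫_0^p P[S ≤ λ] dλ. -/
open MeasureTheory ProbabilityTheory Set
open scoped ENNReal

/-!
On `{S ≤ p ≤ B}` the gain `B - S` splits as `(B - p) + (p - S)`, so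
`gft p S B = 𝟙{S ≤ p} (B - p)⁺ + 𝟙{p ≤ B} (p - S)⁺`, each term a product of a function of `S`
and a function of `B`. Independence factors the expectation of each term, and the layer-cake
formula gives `E[(B - p)⁺] = ∫_p^1 P[B ≥ λ] dλ` and `E[(p - S)⁺] = ∫_0^p P[S ≤ λ] dλ`.
-/

theorem gft_eq_indicator_mul_add (p s b : ℝ) :
    gft p s b = (Iic p).indicator 1 s * max (b - p) 0 + (Ici p).indicator 1 b * max (p - s) 0 := by
  by_cases hs : s ≤ p <;> by_cases hb : p ≤ b <;> simp [gft, hs, hb] <;> linarith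

section LayerCake

variable {Ω : Type*} [MeasurableSpace Ω] {μ : Measure Ω} [IsFiniteMeasure μ] {X : Ω → ℝ}

theorem integrable_max_sub_const {b : ℝ} (hX : Measurable X) (hXb : ∀ᵐ ω ∂μ, X ω ≤ b) (p : ℝ) :
    Integrable (fun ω ↦ max (X ω - p) 0) μ :=
  .of_bound (by fun_prop) (max (b - p) 0) <| hXb.mono fun ω h ↦ by
    rw [Real.norm_of_nonneg (le_max_right _ _)]
    exact max_le_max_right 0 (sub_le_sub_right h p)

theorem integrable_max_const_sub {a : ℝ} (hX : Measurable X) (hXa : ∀ᵐ ω ∂μ, a ≤ X ω) (p : ℝ) :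
    Integrable (fun ω ↦ max (p - X ω) 0) μ := by
  simpa [neg_add_eq_sub] using integrable_max_sub_const hX.neg (hXa.mono fun _ ↦ neg_le_neg) (-p)

theorem integral_max_sub_const_eq_intervalIntegral_meas_le {p b : ℝ} (hX : Measurable X)
    (hpb : p ≤ b) (hXb : ∀ᵐ ω ∂μ, X ω ≤ b) :
    ∫ ω, max (X ω - p) 0 ∂μ = ∫ l in p..b, μ.real {ω | l ≤ X ω} := by
  have hbound : ∀ᵐ ω ∂μ, max (X ω - p) 0 ≤ b - p :=
    hXb.mono fun ω h ↦ max_le (sub_le_sub_right h p) (sub_nonneg.2 hpb)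
  have hshift : EqOn (fun t ↦ μ.real {ω | t ≤ max (X ω - p) 0}) (fun t ↦ μ.real {ω | t + p ≤ X ω})
      (Ioc 0 (b - p)) := fun t ht ↦ by
    simp only [le_max_iff, not_le.2 ht.1, or_false, le_sub_iff_add_le]
  rw [(integrable_max_sub_const hX hXb p).integral_eq_integral_Ioc_meas_le
      (ae_of_all _ fun _ ↦ le_max_right _ _) hbound, setIntegral_congr_fun measurableSet_Ioc hshift,
    ← intervalIntegral.integral_of_le (sub_nonneg.2 hpb),
    intervalIntegral.integral_comp_add_right (fun l ↦ μ.real {ω | l ≤ X ω}), zero_add,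
    sub_add_cancel]

theorem integral_max_const_sub_eq_intervalIntegral_meas_ge {a p : ℝ} (hX : Measurable X)
    (hap : a ≤ p) (hXa : ∀ᵐ ω ∂μ, a ≤ X ω) :
    ∫ ω, max (p - X ω) 0 ∂μ = ∫ l in a..p, μ.real {ω | X ω ≤ l} := by
  have h := integral_max_sub_const_eq_intervalIntegral_meas_le hX.neg (neg_le_neg hap)
    (hXa.mono fun _ ↦ neg_le_neg)
  simp only [Pi.neg_apply, neg_sub_neg] at h
  rw [h, ← intervalIntegral.integral_comp_neg]
  simp only [neg_le_neg_iff]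

end LayerCake

section Independence

variable {Ω 𝓧 𝓨 : Type*} [MeasurableSpace Ω] [MeasurableSpace 𝓧] [MeasurableSpace 𝓨]
  {μ : Measure Ω} {X : Ω → 𝓧} {Y : Ω → 𝓨} {s : Set 𝓧}

theorem MeasureTheory.Integrable.indicator_one_comp_mul {f : Ω → ℝ} (hf : Integrable f μ)
    (hX : Measurable X) (hs : MeasurableSet s) : Integrable (fun ω ↦ s.indicator 1 (X ω) * f ω) μ :=
  hf.bdd_mul (c := 1) ((measurable_one.indicator hs).comp hX).aestronglyMeasurable <|
    ae_of_all _ fun _ ↦ (norm_indicator_le_norm_self _ _).trans_eq norm_one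

theorem ProbabilityTheory.IndepFun.integral_indicator_one_comp_mul_comp (hXY : IndepFun X Y μ)
    (hX : Measurable X) (hY : Measurable Y) (hs : MeasurableSet s) {g : 𝓨 → ℝ} (hg : Measurable g) :
    ∫ ω, s.indicator 1 (X ω) * g (Y ω) ∂μ = μ.real (X ⁻¹' s) * ∫ ω, g (Y ω) ∂μ := by
  rw [hXY.integral_fun_comp_mul_comp hX.aemeasurable hY.aemeasurable
    (measurable_one.indicator hs).aestronglyMeasurable hg.aestronglyMeasurable]
  simp_rw [← indicator_comp_right, Pi.one_comp, integral_indicator_one (hX hs)]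

end Independence

/-- **Second Decomposition Lemma (formula).**
If `S` and `B` are independent `[0,1]`-valued random variables, then for every `p ∈ [0,1]`,
`E[gft(p,S,B)] = P[S ≤ p]·∫_p^1 P[B ≥ λ] dλ + P[B ≥ p]·∫_0^p P[S ≤ λ] dλ`. -/
theorem second_decomposition_formula
    {Ω : Type} [MeasurableSpace Ω] (μ : Measure Ω) [IsProbabilityMeasure μ]
    (S B : Ω → ℝ) (hS : Measurable S) (hB : Measurable B)
    (hSr : ∀ ω, S ω ∈ Icc (0:ℝ) 1) (hBr : ∀ ω, B ω ∈ Icc (0:ℝ) 1)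
    (hindep : IndepFun S B μ)
    (p : ℝ) (hp : p ∈ Icc (0:ℝ) 1) :
    ∫ ω, gft p (S ω) (B ω) ∂μ
      = (μ {ω | S ω ≤ p}).toReal * (∫ l in p..1, (μ {ω | l ≤ B ω}).toReal)
        + (μ {ω | p ≤ B ω}).toReal * ∫ l in (0:ℝ)..p, (μ {ω | S ω ≤ l}).toReal := by
  have hS0 : ∀ᵐ ω ∂μ, 0 ≤ S ω := ae_of_all _ fun ω ↦ (hSr ω).1
  have hB1 : ∀ᵐ ω ∂μ, B ω ≤ 1 := ae_of_all _ fun ω ↦ (hBr ω).2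
  simp_rw [gft_eq_indicator_mul_add]
  rw [integral_add ((integrable_max_sub_const hB hB1 p).indicator_one_comp_mul hS measurableSet_Iic)
      ((integrable_max_const_sub hS hS0 p).indicator_one_comp_mul hB measurableSet_Ici),
    hindep.integral_indicator_one_comp_mul_comp hS hB measurableSet_Iic
      (g := fun b ↦ max (b - p) 0) (by fun_prop),
    hindep.symm.integral_indicator_one_comp_mul_comp hB hS measurableSet_Ici
      (g := fun s ↦ max (p - s) 0) (by fun_prop),
    integral_max_sub_const_eq_intervalIntegral_meas_le hB hp.2 hB1,
    integral_max_const_sub_eq_intervalIntegral_meas_ge hS hp.1 hS0]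
  rfl
end

section
/- (Second Decomposition Lemma, Lipschitz part.) Let S and B be independent [0,1]-valued random variables, each admitting a density (with respect to Lebesgue measure) bounded above by M ≥ 1. Then the map p ↦ E[gft(p,S,B)] is Lipschitz on [0,1] with Lipschitz constant 4M, i.e., |E[gft(q,S,B)] − E[gft(p,S,B)]| ≤ 4M·|q − p| for all p, q ∈ [0,1]. -/
/-!
Moving the price from `p` to `q ≥ p` changes `gft(·, s, b)` by at most `|b - s| ≤ 1`, and only
when the seller's or the buyer's valuation lies in `[p, q]`. Hence the expected gains differ by at
most `P(S ∈ [p, q]) + P(B ∈ [p, q]) ≤ 2M (q - p)`, since each density is bounded by `M`.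
-/

open MeasureTheory ProbabilityTheory Set
open scoped ENNReal

lemma measurable_gft (p : ℝ) : Measurable fun x : ℝ × ℝ => gft p x.1 x.2 :=
  Measurable.ite ((measurableSet_le measurable_fst measurable_const).inter
    (measurableSet_le measurable_const measurable_snd)) (measurable_snd.sub measurable_fst)
    measurable_const

lemma abs_gft_le_one (p : ℝ) {s b : ℝ} (hs : s ∈ Icc (0 : ℝ) 1) (hb : b ∈ Icc (0 : ℝ) 1) :
    |gft p s b| ≤ 1 := by
  unfold gft
  split_ifs
  · simpa using abs_sub_le_of_le_of_le hb.1 hb.2 hs.1 hs.2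
  · simp

lemma abs_gft_sub_gft_le {p q s b : ℝ} (hpq : p ≤ q) (hs : s ∈ Icc (0 : ℝ) 1)
    (hb : b ∈ Icc (0 : ℝ) 1) :
    |gft q s b - gft p s b| ≤ (Icc p q).indicator 1 s + (Icc p q).indicator 1 b := by
  have hind (x : ℝ) : 0 ≤ (Icc p q).indicator (1 : ℝ → ℝ) x :=
    indicator_nonneg (fun _ _ => zero_le_one) x
  have hone {x : ℝ} (hx : x ∈ Icc p q) : (Icc p q).indicator (1 : ℝ → ℝ) x = 1 :=
    indicator_of_mem hx 1
  have hbs : |b - s| ≤ 1 := by simpa using abs_sub_le_of_le_of_le hb.1 hb.2 hs.1 hs.2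
  unfold gft
  split_ifs with hq hp hp
  · simpa using add_nonneg (hind s) (hind b)
  · have hps : p ≤ s := not_lt.1 fun hsp => hp ⟨hsp.le, hpq.trans hq.2⟩
    rw [sub_zero, hone ⟨hps, hq.1⟩]
    linarith [hind b]
  · have hbq : b ≤ q := not_lt.1 fun hqb => hq ⟨hp.1.trans hpq, hqb.le⟩
    rw [zero_sub, abs_neg, hone ⟨hp.2, hbq⟩]
    linarith [hind s]
  · simpa using add_nonneg (hind s) (hind b)

lemma withDensity_apply_le_mul {α : Type*} [MeasurableSpace α] (μ : Measure α)
    {f : α → ℝ≥0∞} {c : ℝ≥0∞} (hf : ∀ x, f x ≤ c) {s : Set α} (hs : MeasurableSet s) :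
    μ.withDensity f s ≤ c * μ s := by
  rw [withDensity_apply _ hs, ← setLIntegral_const]
  exact setLIntegral_mono measurable_const fun x _ => hf x

lemma measureReal_preimage_Icc_le_of_density_le {Ω : Type*} [MeasurableSpace Ω]
    {μ : Measure Ω} {X : Ω → ℝ} (hX : Measurable X) {f : ℝ → ℝ≥0∞} {M : ℝ} (hM : 0 ≤ M)
    (hf : ∀ x, f x ≤ ENNReal.ofReal M) (hlaw : μ.map X = volume.withDensity f)
    {p q : ℝ} (hpq : p ≤ q) :
    μ.real (X ⁻¹' Icc p q) ≤ M * (q - p) := by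
  have hle : μ (X ⁻¹' Icc p q) ≤ ENNReal.ofReal (M * (q - p)) := by
    rw [← Measure.map_apply hX measurableSet_Icc, hlaw, ENNReal.ofReal_mul hM,
      ← Real.volume_Icc]
    exact withDensity_apply_le_mul volume hf measurableSet_Icc
  exact ENNReal.toReal_le_of_le_ofReal (mul_nonneg hM (sub_nonneg.2 hpq)) hle

section Bounded

variable {Ω : Type*} [MeasurableSpace Ω] {μ : Measure Ω} {S B : Ω → ℝ}
  (hS : Measurable S) (hB : Measurable B)
  (hSr : ∀ ω, S ω ∈ Icc (0 : ℝ) 1) (hBr : ∀ ω, B ω ∈ Icc (0 : ℝ) 1)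
include hS hB hSr hBr

lemma integrable_gft [IsFiniteMeasure μ] (p : ℝ) :
    Integrable (fun ω => gft p (S ω) (B ω)) μ :=
  (integrable_const (1 : ℝ)).mono' ((measurable_gft p).comp (hS.prodMk hB)).aestronglyMeasurable
    (ae_of_all _ fun ω => abs_gft_le_one p (hSr ω) (hBr ω))

lemma abs_integral_gft_sub_le_s10 [IsFiniteMeasure μ] {p q : ℝ} (hpq : p ≤ q) :
    |(∫ ω, gft q (S ω) (B ω) ∂μ) - ∫ ω, gft p (S ω) (B ω) ∂μ|
      ≤ μ.real (S ⁻¹' Icc p q) + μ.real (B ⁻¹' Icc p q) := by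
  have hmS := hS (measurableSet_Icc (a := p) (b := q))
  have hmB := hB (measurableSet_Icc (a := p) (b := q))
  have hint := integrable_gft hS hB hSr hBr (μ := μ)
  rw [← integral_sub (hint q) (hint p), ← integral_indicator_one hmS,
    ← integral_indicator_one hmB, ← integral_add ((integrable_const 1).indicator hmS)
      ((integrable_const 1).indicator hmB)]
  refine abs_integral_le_integral_abs.trans (integral_mono ((hint q).sub (hint p)).abs
    (((integrable_const 1).indicator hmS).add ((integrable_const 1).indicator hmB)) fun ω => ?_)
  simpa only [Pi.add_apply, ← indicator_comp_right S, ← indicator_comp_right B, Pi.one_comp]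
    using abs_gft_sub_gft_le hpq (hSr ω) (hBr ω)

end Bounded

theorem second_decomposition_lipschitz_general
    {Ω : Type} [MeasurableSpace Ω] (μ : Measure Ω) [IsProbabilityMeasure μ]
    (S B : Ω → ℝ) (hS : Measurable S) (hB : Measurable B)
    (hSr : ∀ ω, S ω ∈ Icc (0:ℝ) 1) (hBr : ∀ ω, B ω ∈ Icc (0:ℝ) 1)
    (M : ℝ) (hM : 1 ≤ M)
    (fS fB : ℝ → ℝ≥0∞)
    (hfSbd : ∀ x, fS x ≤ ENNReal.ofReal M) (hfBbd : ∀ x, fB x ≤ ENNReal.ofReal M)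
    (hlawS : μ.map S = volume.withDensity fS)
    (hlawB : μ.map B = volume.withDensity fB) :
    ∀ p ∈ Icc (0:ℝ) 1, ∀ q ∈ Icc (0:ℝ) 1,
      |(∫ ω, gft q (S ω) (B ω) ∂μ) - ∫ ω, gft p (S ω) (B ω) ∂μ| ≤ 4 * M * |q - p| := by
  intro p hp q hq
  wlog hpq : p ≤ q generalizing p q
  · rw [abs_sub_comm, abs_sub_comm q]
    exact this q hq p hp (le_of_not_ge hpq)
  have hM0 : 0 ≤ M := zero_le_one.trans hM
  have hSpq := measureReal_preimage_Icc_le_of_density_le hS hM0 hfSbd hlawS hpq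
  have hBpq := measureReal_preimage_Icc_le_of_density_le hB hM0 hfBbd hlawB hpq
  calc |(∫ ω, gft q (S ω) (B ω) ∂μ) - ∫ ω, gft p (S ω) (B ω) ∂μ|
      ≤ μ.real (S ⁻¹' Icc p q) + μ.real (B ⁻¹' Icc p q) :=
        abs_integral_gft_sub_le_s10 hS hB hSr hBr hpq
    _ ≤ 4 * M * |q - p| := by
        rw [abs_of_nonneg (sub_nonneg.2 hpq)]
        nlinarith

/-- **Second Decomposition Lemma (Lipschitz part).**
If `S` and `B` are independent `[0,1]`-valued random variables whose laws admit densities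
(with respect to Lebesgue measure) bounded above by `M ≥ 1`, then `p ↦ E[gft(p,S,B)]` is
`4M`-Lipschitz on `[0,1]`. -/
theorem second_decomposition_lipschitz
    {Ω : Type} [MeasurableSpace Ω] (μ : Measure Ω) [IsProbabilityMeasure μ]
    (S B : Ω → ℝ) (hS : Measurable S) (hB : Measurable B)
    (hSr : ∀ ω, S ω ∈ Icc (0:ℝ) 1) (hBr : ∀ ω, B ω ∈ Icc (0:ℝ) 1)
    (hindep : IndepFun S B μ)
    (M : ℝ) (hM : 1 ≤ M)
    (fS fB : ℝ → ℝ≥0∞) (hfS : Measurable fS) (hfB : Measurable fB)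
    (hfSbd : ∀ x, fS x ≤ ENNReal.ofReal M) (hfBbd : ∀ x, fB x ≤ ENNReal.ofReal M)
    (hlawS : μ.map S = volume.withDensity fS)
    (hlawB : μ.map B = volume.withDensity fB) :
    ∀ p ∈ Icc (0:ℝ) 1, ∀ q ∈ Icc (0:ℝ) 1,
      |(∫ ω, gft q (S ω) (B ω) ∂μ) - ∫ ω, gft p (S ω) (B ω) ∂μ| ≤ 4 * M * |q - p| :=
  second_decomposition_lipschitz_general μ S B hS hB hSr hBr M hM fS fB hfSbd hfBbd hlawS hlawB
end

section
/- (Indistinguishability under realistic feedback.) Let f := (64/3)·(𝟙_{[0,1/8]×[3/8,1/2]} + 𝟙_{[1/4,3/8]×[7/8,1]} + 𝟙_{[1/2,5/8]×[5/8,3/4]}) and g(s,b) := f(1−b, 1−s), both probability densities on [0,1]². Then: (i) for every p ∈ [0,1], the joint distribution of the pair (𝟙{S ≤ p}, 𝟙{p ≤ B}) is the same when (S,B) has density f as when (S,B) has density g; (ii) when (S,B) has density f, E[gft(3/8, S, B)] = 1/3 while E[gft(p, S, B)] ≤ 1/4 for every p ∈ (1/2, 1]; and symmetrically, when (S,B)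 has density g, E[gft(5/8, S, B)] = 1/3 while E[gft(p, S, B)] ≤ 1/4 for every p ∈ [0, 1/2]. -/
open MeasureTheory Set
open scoped ENNReal

/-- The density `f = (64/3)·(𝟙_{[0,1/8]×[3/8,1/2]} + 𝟙_{[1/4,3/8]×[7/8,1]} + 𝟙_{[1/2,5/8]×[5/8,3/4]})`. -/
noncomputable def fdens : ℝ × ℝ → ℝ := fun x =>
  (64 / 3) * ((if x.1 ∈ Icc (0:ℝ) (1/8) ∧ x.2 ∈ Icc (3/8:ℝ) (1/2) then (1:ℝ) else 0)
    + (if x.1 ∈ Icc (1/4:ℝ) (3/8) ∧ x.2 ∈ Icc (7/8:ℝ) 1 then (1:ℝ) else 0)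
    + (if x.1 ∈ Icc (1/2:ℝ) (5/8) ∧ x.2 ∈ Icc (5/8:ℝ) (3/4) then (1:ℝ) else 0))

/-- The reflected density `g(s,b) = f(1−b, 1−s)`. -/
noncomputable def gdens : ℝ × ℝ → ℝ := fun x => fdens (1 - x.2, 1 - x.1)

/-- The measure on `[0,1]²` with density `f` (w.r.t. Lebesgue measure on the plane). -/
noncomputable def μf : Measure (ℝ × ℝ) :=
  volume.withDensity fun x => ENNReal.ofReal (fdens x)

/-- The measure on `[0,1]²` with density `g` (w.r.t. Lebesgue measure on the plane). -/
noncomputable def μg : Measure (ℝ × ℝ) :=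
  volume.withDensity fun x => ENNReal.ofReal (gdens x)

/-!
Both densities are `64/3` times Lebesgue measure on three `1/8 × 1/8` squares `Iᵢ × Jⱼ`, with seller
intervals `I₁ = [0,1/8]`, `I₂ = [1/4,3/8]`, `I₃ = [1/2,5/8]` and buyer intervals `J₁ = [3/8,1/2]`,
`J₂ = [5/8,3/4]`, `J₃ = [7/8,1]`: `f` uses the pairs `(1,1), (2,3), (3,2)` and `g` the pairs
`(3,3), (1,2), (2,1)`.

(i) On a square the feedback law is the product of the law `αᵢ` of `𝟙{S ≤ p}` on `Iᵢ` and the law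
`βⱼ` of `𝟙{p ≤ B}` on `Jⱼ`, so the two feedback laws agree as soon as `α₁ = α₂` or `β₁ = β₂`, and
`α₂ = α₃` or `β₂ = β₃`. Since `I₁, I₂ ≤ 3/8 ≤ J₁, J₂` and `I₂, I₃ ≤ 5/8 ≤ J₂, J₃`, every price lies
either above both seller intervals or below both buyer intervals of each of these pairs.

(ii) On each square the seller side lies left of the buyer side, so `gft p s b ≤ b - s` there, with
equality when `p` separates the two sides, and `gft p` vanishes a.e. on it when `p` lies outside its
span. The expected gains are thus equal to, or bounded by, explicit integrals of `b - s` over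
squares.
-/

section

variable {α β : Type*} [MeasurableSpace α] [MeasurableSpace β] (μ : Measure α)

lemma withDensity_ofReal_mul_indicator_add_add {c : ℝ} (hc : 0 ≤ c) {A B C : Set α}
    (hA : MeasurableSet A) (hB : MeasurableSet B) (hC : MeasurableSet C) :
    μ.withDensity (fun x => ENNReal.ofReal (c * (A.indicator 1 x + B.indicator 1 x
      + C.indicator 1 x)))
      = ENNReal.ofReal c • (μ.restrict A + μ.restrict B + μ.restrict C) := by
  have hdens : (fun x => ENNReal.ofReal (c * (A.indicator 1 x + B.indicator 1 x
      + C.indicator 1 x)))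
      = ENNReal.ofReal c • (A.indicator 1 + B.indicator 1 + C.indicator 1) := by
    funext x
    simp only [Pi.smul_apply, Pi.add_apply, smul_eq_mul, indicator, Pi.one_apply]
    split_ifs <;> norm_num [ENNReal.ofReal_mul hc, ENNReal.ofReal_add]
  rw [hdens, withDensity_smul _ (by fun_prop (disch := measurability)),
    withDensity_add_left (by fun_prop (disch := measurability)),
    withDensity_add_left (by fun_prop (disch := measurability)),
    withDensity_indicator hA, withDensity_indicator hB, withDensity_indicator hC,
    withDensity_one, withDensity_one, withDensity_one]

lemma integral_ofReal_smul_add_add {c : ℝ} (hc : 0 ≤ c) {f : α → ℝ} {ν₁ ν₂ ν₃ : Measure α}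
    (h₁ : Integrable f ν₁) (h₂ : Integrable f ν₂) (h₃ : Integrable f ν₃) :
    ∫ x, f x ∂(ENNReal.ofReal c • (ν₁ + ν₂ + ν₃))
      = c * (∫ x, f x ∂ν₁ + ∫ x, f x ∂ν₂ + ∫ x, f x ∂ν₃) := by
  rw [integral_smul_measure, integral_add_measure (h₁.add_measure h₂) h₃,
    integral_add_measure h₁ h₂, ENNReal.toReal_ofReal hc, smul_eq_mul]

lemma map_restrict_eq_smul_dirac {f : α → β} {b : β} {I : Set α} (hI : MeasurableSet I)
    (hf : EqOn f (fun _ => b) I) : (μ.restrict I).map f = μ I • Measure.dirac b := by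
  rw [Measure.map_congr ((ae_restrict_iff' hI).2 (Filter.Eventually.of_forall hf)),
    Measure.map_const, Measure.restrict_apply_univ]

lemma map_prodMap_restrict_prod {γ δ : Type*} [MeasurableSpace γ] [MeasurableSpace δ]
    (ν : Measure γ) [SFinite μ] [SFinite ν] {f : α → β} {g : γ → δ} (hf : Measurable f)
    (hg : Measurable g) (I : Set α) (J : Set γ) :
    ((μ.prod ν).restrict (I ×ˢ J)).map (Prod.map f g)
      = ((μ.restrict I).map f).prod ((ν.restrict J).map g) := by
  rw [← Measure.prod_restrict, Measure.map_prod_map _ _ hf hg]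

end

lemma pairing_sum_eq {A B M : Type*} [AddCommMonoid M] (P : A → B → M) {a₁ a₂ a₃ : A}
    {b₁ b₂ b₃ : B} (h₁₂ : a₁ = a₂ ∨ b₁ = b₂) (h₂₃ : a₂ = a₃ ∨ b₂ = b₃) :
    P a₁ b₁ + P a₂ b₃ + P a₃ b₂ = P a₃ b₃ + P a₁ b₂ + P a₂ b₁ := by
  rcases h₁₂ with rfl | rfl <;> rcases h₂₃ with rfl | rfl <;> abel

lemma measurable_decide_le (p : ℝ) : Measurable fun s : ℝ => decide (s ≤ p) :=
  measurable_to_bool <| by convert measurableSet_Iic (a := p); ext; simp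

lemma measurable_decide_ge (p : ℝ) : Measurable fun b : ℝ => decide (p ≤ b) :=
  measurable_to_bool <| by convert measurableSet_Ici (a := p); ext; simp

lemma map_decide_le_eq_or_map_decide_ge_eq (μ : Measure ℝ) {m : ℝ} (p : ℝ) {I I' J J' : Set ℝ}
    (hIm : MeasurableSet I) (hI'm : MeasurableSet I') (hJm : MeasurableSet J)
    (hJ'm : MeasurableSet J') (hI : I ⊆ Iic m) (hI' : I' ⊆ Iic m) (hJ : J ⊆ Ici m)
    (hJ' : J' ⊆ Ici m) (hII' : μ I = μ I') (hJJ' : μ J = μ J') :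
    (μ.restrict I).map (fun s => decide (s ≤ p)) = (μ.restrict I').map (fun s => decide (s ≤ p))
      ∨ (μ.restrict J).map (fun b => decide (p ≤ b))
        = (μ.restrict J').map (fun b => decide (p ≤ b)) := by
  rcases le_total m p with h | h
  · left
    rw [map_restrict_eq_smul_dirac μ hIm (b := true) fun s hs => decide_eq_true ((hI hs).trans h),
      map_restrict_eq_smul_dirac μ hI'm fun s hs => decide_eq_true ((hI' hs).trans h), hII']
  · right
    rw [map_restrict_eq_smul_dirac μ hJm (b := true) fun b hb => decide_eq_true (h.trans (hJ hb)),
      map_restrict_eq_smul_dirac μ hJ'm fun b hb => decide_eq_true (h.trans (hJ' hb)), hJJ']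

lemma gft_le_sub (p : ℝ) {s b : ℝ} (h : s ≤ b) : gft p s b ≤ b - s := by
  unfold gft; split_ifs <;> linarith

lemma integrableOn_gft (p a a' c c' : ℝ) :
    IntegrableOn (fun x : ℝ × ℝ => gft p x.1 x.2) (Icc a a' ×ˢ Icc c c') := by
  have hgft : (fun x : ℝ × ℝ => gft p x.1 x.2) = (Iic p ×ˢ Ici p).indicator fun x => x.2 - x.1 := by
    funext x
    simp [gft, indicator_apply]
  rw [hgft, Icc_prod_Icc]
  exact (continuous_snd.sub continuous_fst).integrableOn_Icc.indicator
    (measurableSet_Iic.prod measurableSet_Ici)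

lemma integrableOn_snd_sub_fst (a a' c c' : ℝ) :
    IntegrableOn (fun x : ℝ × ℝ => x.2 - x.1) (Icc a a' ×ˢ Icc c c') := by
  rw [Icc_prod_Icc]
  exact (continuous_snd.sub continuous_fst).integrableOn_Icc

lemma setIntegral_Icc_id {u v : ℝ} (h : u ≤ v) : ∫ x in Icc u v, x = (v ^ 2 - u ^ 2) / 2 := by
  rw [integral_Icc_eq_integral_Ioc, ← intervalIntegral.integral_of_le h, integral_id]

section Rectangle

variable (p : ℝ) {a a' c c' : ℝ}

lemma setIntegral_snd_sub_fst (ha : a ≤ a') (hc : c ≤ c') :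
    ∫ x in Icc a a' ×ˢ Icc c c', (x.2 - x.1)
      = (a' - a) * (c' - c) * ((c + c') / 2 - (a + a') / 2) := by
  have hfst : Integrable (fun x : ℝ × ℝ => x.1) (volume.restrict (Icc a a' ×ˢ Icc c c')) := by
    rw [Icc_prod_Icc]; exact continuous_fst.integrableOn_Icc
  have hsnd : Integrable (fun x : ℝ × ℝ => x.2) (volume.restrict (Icc a a' ×ˢ Icc c c')) := by
    rw [Icc_prod_Icc]; exact continuous_snd.integrableOn_Icc
  rw [integral_sub hsnd hfst, Measure.volume_eq_prod, ← Measure.prod_restrict,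
    integral_fun_snd (fun b => b), integral_fun_fst (fun s => s), setIntegral_Icc_id ha,
    setIntegral_Icc_id hc]
  simp only [Measure.real, Measure.restrict_apply_univ, Real.volume_Icc,
    ENNReal.toReal_ofReal (sub_nonneg.2 ha), ENNReal.toReal_ofReal (sub_nonneg.2 hc), smul_eq_mul]
  ring

lemma setIntegral_gft_of_le_of_le (hp : a' ≤ p) (hp' : p ≤ c) :
    ∫ x in Icc a a' ×ˢ Icc c c', gft p x.1 x.2 = ∫ x in Icc a a' ×ˢ Icc c c', (x.2 - x.1) :=
  setIntegral_congr_fun (measurableSet_Icc.prod measurableSet_Icc) fun _ hx =>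
    if_pos ⟨hx.1.2.trans hp, hp'.trans hx.2.1⟩

lemma setIntegral_gft_le (h : a' ≤ c) :
    ∫ x in Icc a a' ×ˢ Icc c c', gft p x.1 x.2 ≤ ∫ x in Icc a a' ×ˢ Icc c c', (x.2 - x.1) :=
  setIntegral_mono_on (integrableOn_gft p a a' c c') (integrableOn_snd_sub_fst a a' c c')
    (measurableSet_Icc.prod measurableSet_Icc) fun _ hx =>
      gft_le_sub p (hx.1.2.trans (h.trans hx.2.1))

lemma setIntegral_gft_eq_zero (hp : p ≤ a ∨ c' ≤ p) :
    ∫ x in Icc a a' ×ˢ Icc c c', gft p x.1 x.2 = 0 := by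
  have hae : Icc a a' ×ˢ Icc c c' =ᵐ[volume] Ioo a a' ×ˢ Ioo c c' := by
    rw [Measure.volume_eq_prod]
    exact (Measure.set_prod_ae_eq Ioo_ae_eq_Icc Ioo_ae_eq_Icc).symm
  rw [setIntegral_congr_set hae]
  refine setIntegral_eq_zero_of_forall_eq_zero fun _ hx => if_neg ?_
  rintro ⟨hs, hb⟩
  rcases hp with hp | hp
  · linarith [hx.1.1]
  · linarith [hx.2.2]

end Rectangle

lemma μf_eq : μf = ENNReal.ofReal (64 / 3) •
    (volume.restrict (Icc (0 : ℝ) (1 / 8) ×ˢ Icc (3 / 8 : ℝ) (1 / 2))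
      + volume.restrict (Icc (1 / 4 : ℝ) (3 / 8) ×ˢ Icc (7 / 8 : ℝ) 1)
      + volume.restrict (Icc (1 / 2 : ℝ) (5 / 8) ×ˢ Icc (5 / 8 : ℝ) (3 / 4))) := by
  rw [μf, ← withDensity_ofReal_mul_indicator_add_add _ (by norm_num)
    (measurableSet_Icc.prod measurableSet_Icc) (measurableSet_Icc.prod measurableSet_Icc)
    (measurableSet_Icc.prod measurableSet_Icc)]
  congr 1
  funext x
  simp only [fdens, indicator, mem_prod, Pi.one_apply]

lemma μg_eq : μg = ENNReal.ofReal (64 / 3) •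
    (volume.restrict (Icc (1 / 2 : ℝ) (5 / 8) ×ˢ Icc (7 / 8 : ℝ) 1)
      + volume.restrict (Icc (0 : ℝ) (1 / 8) ×ˢ Icc (5 / 8 : ℝ) (3 / 4))
      + volume.restrict (Icc (1 / 4 : ℝ) (3 / 8) ×ˢ Icc (3 / 8 : ℝ) (1 / 2))) := by
  rw [μg, ← withDensity_ofReal_mul_indicator_add_add _ (by norm_num)
    (measurableSet_Icc.prod measurableSet_Icc) (measurableSet_Icc.prod measurableSet_Icc)
    (measurableSet_Icc.prod measurableSet_Icc)]
  congr 1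
  funext x
  simp only [gdens, fdens, sub_mem_Icc_iff_right, indicator, mem_prod, Pi.one_apply]
  norm_num [and_comm]

lemma integral_gft_μf (p : ℝ) : ∫ x, gft p x.1 x.2 ∂μf
    = 64 / 3 * ((∫ x in Icc (0 : ℝ) (1 / 8) ×ˢ Icc (3 / 8 : ℝ) (1 / 2), gft p x.1 x.2)
      + (∫ x in Icc (1 / 4 : ℝ) (3 / 8) ×ˢ Icc (7 / 8 : ℝ) 1, gft p x.1 x.2)
      + ∫ x in Icc (1 / 2 : ℝ) (5 / 8) ×ˢ Icc (5 / 8 : ℝ) (3 / 4), gft p x.1 x.2) := by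
  rw [μf_eq, integral_ofReal_smul_add_add (by norm_num) (integrableOn_gft p _ _ _ _)
    (integrableOn_gft p _ _ _ _) (integrableOn_gft p _ _ _ _)]

lemma integral_gft_μg (p : ℝ) : ∫ x, gft p x.1 x.2 ∂μg
    = 64 / 3 * ((∫ x in Icc (1 / 2 : ℝ) (5 / 8) ×ˢ Icc (7 / 8 : ℝ) 1, gft p x.1 x.2)
      + (∫ x in Icc (0 : ℝ) (1 / 8) ×ˢ Icc (5 / 8 : ℝ) (3 / 4), gft p x.1 x.2)
      + ∫ x in Icc (1 / 4 : ℝ) (3 / 8) ×ˢ Icc (3 / 8 : ℝ) (1 / 2), gft p x.1 x.2) := by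
  rw [μg_eq, integral_ofReal_smul_add_add (by norm_num) (integrableOn_gft p _ _ _ _)
    (integrableOn_gft p _ _ _ _) (integrableOn_gft p _ _ _ _)]

lemma integral_gft_three_eighths_μf : ∫ x, gft (3 / 8) x.1 x.2 ∂μf = 1 / 3 := by
  rw [integral_gft_μf, setIntegral_gft_eq_zero (a := 1 / 2) _ (by norm_num),
    setIntegral_gft_of_le_of_le _ (by norm_num) (by norm_num),
    setIntegral_gft_of_le_of_le _ (by norm_num) (by norm_num),
    setIntegral_snd_sub_fst (by norm_num) (by norm_num),
    setIntegral_snd_sub_fst (by norm_num) (by norm_num)]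
  norm_num

lemma integral_gft_five_eighths_μg : ∫ x, gft (5 / 8) x.1 x.2 ∂μg = 1 / 3 := by
  rw [integral_gft_μg, setIntegral_gft_eq_zero (a := 1 / 4) _ (by norm_num),
    setIntegral_gft_of_le_of_le _ (by norm_num) (by norm_num),
    setIntegral_gft_of_le_of_le _ (by norm_num) (by norm_num),
    setIntegral_snd_sub_fst (by norm_num) (by norm_num),
    setIntegral_snd_sub_fst (by norm_num) (by norm_num)]
  norm_num

lemma integral_gft_μf_le {p : ℝ} (hp : 1 / 2 ≤ p) : ∫ x, gft p x.1 x.2 ∂μf ≤ 1 / 4 := by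
  have h₂ := setIntegral_gft_le p (a := 1 / 4) (a' := 3 / 8) (c := 7 / 8) (c' := 1) (by norm_num)
  have h₃ := setIntegral_gft_le p (a := 1 / 2) (a' := 5 / 8) (c := 5 / 8) (c' := 3 / 4)
    (by norm_num)
  rw [setIntegral_snd_sub_fst (by norm_num) (by norm_num)] at h₂ h₃
  rw [integral_gft_μf, setIntegral_gft_eq_zero (c' := 1 / 2) _ (Or.inr hp)]
  linarith

lemma integral_gft_μg_le {p : ℝ} (hp : p ≤ 1 / 2) : ∫ x, gft p x.1 x.2 ∂μg ≤ 1 / 4 := by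
  have h₂ := setIntegral_gft_le p (a := 0) (a' := 1 / 8) (c := 5 / 8) (c' := 3 / 4) (by norm_num)
  have h₃ := setIntegral_gft_le p (a := 1 / 4) (a' := 3 / 8) (c := 3 / 8) (c' := 1 / 2)
    (by norm_num)
  rw [setIntegral_snd_sub_fst (by norm_num) (by norm_num)] at h₂ h₃
  rw [integral_gft_μg, setIntegral_gft_eq_zero (a := 1 / 2) _ (Or.inl hp)]
  linarith

lemma map_feedback_μf_eq_map_feedback_μg (p : ℝ) :
    μf.map (Prod.map (fun s => decide (s ≤ p)) fun b => decide (p ≤ b))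
      = μg.map (Prod.map (fun s => decide (s ≤ p)) fun b => decide (p ≤ b)) := by
  have hF := (measurable_decide_le p).prodMap (measurable_decide_ge p)
  simp only [μf_eq, μg_eq, Measure.map_smul, Measure.map_add _ _ hF, Measure.volume_eq_prod,
    map_prodMap_restrict_prod _ _ (measurable_decide_le p) (measurable_decide_ge p)]
  congr 1
  refine pairing_sum_eq (fun α β : Measure Bool => α.prod β) ?_ ?_
  · exact map_decide_le_eq_or_map_decide_ge_eq volume (m := 3 / 8) p measurableSet_Icc
      measurableSet_Icc measurableSet_Icc measurableSet_Icc
      ((Icc_subset_Iic_iff (by norm_num)).2 (by norm_num)) Icc_subset_Iic_self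
      Icc_subset_Ici_self ((Icc_subset_Ici_iff (by norm_num)).2 (by norm_num))
      (by norm_num [Real.volume_Icc]) (by norm_num [Real.volume_Icc])
  · exact map_decide_le_eq_or_map_decide_ge_eq volume (m := 5 / 8) p measurableSet_Icc
      measurableSet_Icc measurableSet_Icc measurableSet_Icc
      ((Icc_subset_Iic_iff (by norm_num)).2 (by norm_num)) Icc_subset_Iic_self
      Icc_subset_Ici_self ((Icc_subset_Ici_iff (by norm_num)).2 (by norm_num))
      (by norm_num [Real.volume_Icc]) (by norm_num [Real.volume_Icc])

/-- **Indistinguishability under realistic feedback.**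
(i) For every price `p ∈ [0,1]`, the law of the realistic feedback `(𝟙{S ≤ p}, 𝟙{p ≤ B})`
is the same under `f` and under `g`; (ii) under `f`, the price `3/8` has expected gain from
trade `1/3` while every `p ∈ (1/2, 1]` earns at most `1/4`; symmetrically, under `g`, the
price `5/8` earns `1/3` while every `p ∈ [0, 1/2]` earns at most `1/4`. -/
theorem realistic_feedback_indistinguishability :
    (∀ p ∈ Icc (0:ℝ) 1,
      μf.map (fun x : ℝ × ℝ => (decide (x.1 ≤ p), decide (p ≤ x.2)))
        = μg.map (fun x : ℝ × ℝ => (decide (x.1 ≤ p), decide (p ≤ x.2))))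
    ∧ (∫ x, gft (3/8) x.1 x.2 ∂μf) = 1/3
    ∧ (∀ p ∈ Ioc (1/2:ℝ) 1, (∫ x, gft p x.1 x.2 ∂μf) ≤ 1/4)
    ∧ (∫ x, gft (5/8) x.1 x.2 ∂μg) = 1/3
    ∧ (∀ p ∈ Icc (0:ℝ) (1/2), (∫ x, gft p x.1 x.2 ∂μg) ≤ 1/4) :=
  ⟨fun p _ => map_feedback_μf_eq_map_feedback_μg p, integral_gft_three_eighths_μf,
    fun _ hp => integral_gft_μf_le hp.1.le, integral_gft_five_eighths_μg,
    fun _ hp => integral_gft_μg_le hp.2⟩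
end

section
/- (Needle-in-a-haystack gap.) Let x ∈ [0,1] and let S and B be independent random variables with laws P[S = 0] = P[S = x] = 1/2 and P[B = x] = P[B = 1] = 1/2. Then E[gft(x, S, B)] = 1/2, and for every price p ∈ [0,1] with p ≠ x, E[gft(x, S, B)] − E[gft(p, S, B)] ≥ min(x, 1−x)/4. -/
open MeasureTheory ProbabilityTheory Set
open scoped ENNReal

section gft

variable {p s b : ℝ}

lemma gft_of_le_of_le (hs : s ≤ p) (hb : p ≤ b) : gft p s b = b - s := if_pos ⟨hs, hb⟩

lemma gft_of_lt_left (h : p < s) : gft p s b = 0 := if_neg fun h' => h.not_ge h'.1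

lemma gft_of_lt_right (h : b < p) : gft p s b = 0 := if_neg fun h' => h.not_ge h'.2

lemma measurable_gft_s17 (p : ℝ) : Measurable fun z : ℝ × ℝ => gft p z.1 z.2 :=
  Measurable.ite ((measurableSet_le measurable_fst measurable_const).inter
      (measurableSet_le measurable_const measurable_snd))
    (measurable_snd.sub measurable_fst) measurable_const

lemma gft_sum_at_needle {x : ℝ} (hx : x ∈ Icc (0:ℝ) 1) :
    gft x 0 x + gft x 0 1 + gft x x x + gft x x 1 = 2 := by
  rw [gft_of_le_of_le hx.1 le_rfl, gft_of_le_of_le hx.1 hx.2, gft_of_le_of_le le_rfl le_rfl,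
    gft_of_le_of_le le_rfl hx.2]
  ring

lemma gft_sum_off_needle {x : ℝ} (hp : p ∈ Icc (0:ℝ) 1) (hpx : p ≠ x) :
    gft p 0 x + gft p 0 1 + gft p x x + gft p x 1 + min x (1 - x) ≤ 2 := by
  rw [gft_of_le_of_le hp.1 hp.2]
  rcases hpx.lt_or_gt with h | h
  · rw [gft_of_le_of_le hp.1 h.le, gft_of_lt_left h, gft_of_lt_left h]
    linarith [min_le_right x (1 - x)]
  · rw [gft_of_lt_right h, gft_of_lt_right h, gft_of_le_of_le h.le hp.2]
    linarith [min_le_left x (1 - x)]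

end gft

section TwoPoint

variable {α β : Type*} [MeasurableSpace α] [MeasurableSpace β]

lemma integral_half_smul_add_half_smul {ν ν' : Measure α} {f : α → ℝ}
    (hf : Integrable f ν) (hf' : Integrable f ν') :
    ∫ a, f a ∂((1/2 : ℝ≥0∞) • ν + (1/2 : ℝ≥0∞) • ν') = (∫ a, f a ∂ν + ∫ a, f a ∂ν') / 2 := by
  rw [integral_add_measure (hf.smul_measure (by simp)) (hf'.smul_measure (by simp)),
    integral_smul_measure, integral_smul_measure, ENNReal.toReal_div, ENNReal.toReal_one,
    ENNReal.toReal_ofNat, smul_eq_mul, smul_eq_mul]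
  ring

lemma integrable_half_dirac_add_half_dirac [MeasurableSingletonClass α] (f : α → ℝ) (a b : α) :
    Integrable f ((1/2 : ℝ≥0∞) • Measure.dirac a + (1/2 : ℝ≥0∞) • Measure.dirac b) :=
  ((integrable_dirac enorm_lt_top).smul_measure (by simp)).add_measure
    ((integrable_dirac enorm_lt_top).smul_measure (by simp))

lemma integral_half_dirac_add_half_dirac [MeasurableSingletonClass α] (f : α → ℝ) (a b : α) :
    ∫ z, f z ∂((1/2 : ℝ≥0∞) • Measure.dirac a + (1/2 : ℝ≥0∞) • Measure.dirac b)
      = (f a + f b) / 2 := by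
  rw [integral_half_smul_add_half_smul (integrable_dirac enorm_lt_top)
    (integrable_dirac enorm_lt_top), integral_dirac, integral_dirac]

lemma half_dirac_add_half_dirac_prod (a b : α) (c d : β) :
    ((1/2 : ℝ≥0∞) • Measure.dirac a + (1/2 : ℝ≥0∞) • Measure.dirac b).prod
        ((1/2 : ℝ≥0∞) • Measure.dirac c + (1/2 : ℝ≥0∞) • Measure.dirac d)
      = (1/2 : ℝ≥0∞) • ((1/2 : ℝ≥0∞) • Measure.dirac (a, c) + (1/2 : ℝ≥0∞) • Measure.dirac (a, d))
        + (1/2 : ℝ≥0∞) • ((1/2 : ℝ≥0∞) • Measure.dirac (b, c)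
          + (1/2 : ℝ≥0∞) • Measure.dirac (b, d)) := by
  simp only [Measure.add_prod, Measure.prod_add, Measure.prod_smul_left, Measure.prod_smul_right,
    Measure.dirac_prod_dirac, smul_add]
  exact add_add_add_comm _ _ _ _

lemma integral_half_dirac_add_half_dirac_prod [MeasurableSingletonClass α]
    [MeasurableSingletonClass β] (f : α × β → ℝ) (a b : α) (c d : β) :
    ∫ z, f z ∂(((1/2 : ℝ≥0∞) • Measure.dirac a + (1/2 : ℝ≥0∞) • Measure.dirac b).prod
        ((1/2 : ℝ≥0∞) • Measure.dirac c + (1/2 : ℝ≥0∞) • Measure.dirac d))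
      = (f (a, c) + f (a, d) + f (b, c) + f (b, d)) / 4 := by
  rw [half_dirac_add_half_dirac_prod, integral_half_smul_add_half_smul
    (integrable_half_dirac_add_half_dirac f _ _) (integrable_half_dirac_add_half_dirac f _ _),
    integral_half_dirac_add_half_dirac, integral_half_dirac_add_half_dirac]
  ring

end TwoPoint

lemma ProbabilityTheory.IndepFun.integral_comp_eq_integral_prod {Ω α β : Type*}
    [MeasurableSpace Ω] [MeasurableSpace α] [MeasurableSpace β] {μ : Measure Ω}
    [IsFiniteMeasure μ] {X : Ω → α} {Y : Ω → β} (hXY : IndepFun X Y μ) (hX : Measurable X)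
    (hY : Measurable Y) {f : α × β → ℝ} (hf : Measurable f) :
    ∫ ω, f (X ω, Y ω) ∂μ = ∫ z, f z ∂((μ.map X).prod (μ.map Y)) := by
  rw [← (indepFun_iff_map_prod_eq_prod_map_map hX.aemeasurable hY.aemeasurable).mp hXY,
    integral_map (hX.prodMk hY).aemeasurable hf.aestronglyMeasurable]

/-- **Needle-in-a-haystack gap.**
Let `x ∈ [0,1]` and let `S, B` be independent with `P[S = 0] = P[S = x] = 1/2` and
`P[B = x] = P[B = 1] = 1/2`.  Then `E[gft(x,S,B)] = 1/2` and every other price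
`p ∈ [0,1]`, `p ≠ x`, is suboptimal by at least `min(x, 1−x)/4`. -/
theorem needle_in_haystack
    {Ω : Type} [MeasurableSpace Ω] (μ : Measure Ω) [IsProbabilityMeasure μ]
    (x : ℝ) (hx : x ∈ Icc (0:ℝ) 1)
    (S B : Ω → ℝ) (hS : Measurable S) (hB : Measurable B)
    (hindep : IndepFun S B μ)
    (hlawS : μ.map S = (1/2 : ℝ≥0∞) • Measure.dirac (0:ℝ) + (1/2 : ℝ≥0∞) • Measure.dirac x)
    (hlawB : μ.map B = (1/2 : ℝ≥0∞) • Measure.dirac x + (1/2 : ℝ≥0∞) • Measure.dirac (1:ℝ)) :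
    (∫ ω, gft x (S ω) (B ω) ∂μ) = 1/2
    ∧ ∀ p ∈ Icc (0:ℝ) 1, p ≠ x →
        (∫ ω, gft x (S ω) (B ω) ∂μ) - (∫ ω, gft p (S ω) (B ω) ∂μ)
          ≥ min x (1 - x) / 4 := by
  have hE (p : ℝ) : ∫ ω, gft p (S ω) (B ω) ∂μ
      = (gft p 0 x + gft p 0 1 + gft p x x + gft p x 1) / 4 := by
    rw [hindep.integral_comp_eq_integral_prod hS hB (measurable_gft_s17 p), hlawS, hlawB,
      integral_half_dirac_add_half_dirac_prod]
  have hEx : ∫ ω, gft x (S ω) (B ω) ∂μ = 1/2 := by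
    rw [hE, gft_sum_at_needle hx]
    norm_num
  refine ⟨hEx, fun p hp hpx => ?_⟩
  rw [hEx, hE]
  linarith [gft_sum_off_needle hp hpx]
end
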